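/- Assume A_q = exp(hH) and that Q − P + A_qᵀ P A_q is negative definite. Let x, r ∈ ℝ^n and let U = (u_0, …, u_{N−1}) be any input sequence with u_i ∈ ℝ^m. Set x⁺ = A_q x + h B_q u_0, r⁺ = exp(hH) r, and let Û = (u_1, …, u_{N−1}, 0) be the shifted input sequence obtained by dropping u_0 and appending the zero vector. Then J(x⁺, r⁺, Û) ≤ J(x, r, U) − u_0ᵀ R u_0 − (x − r)ᵀ Q (x − r). -/

import Mathlib

open Matrix Filter Topology

/-- Predicted states of the quantized system: `x₀ = x`, `x_{i+1} = A_q x_i + h B_q u_i`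
(inputs beyond the horizon are taken to be `0`, but they are never used below). -/
noncomputable def predState {n m N : ℕ} (Aq : Matrix (Fin n) (Fin n) ℝ)
    (Bq : Matrix (Fin n) (Fin m) ℝ) (h : ℝ) (x : Fin n → ℝ)
    (U : Fin N → Fin m → ℝ) : ℕ → (Fin n → ℝ)
  | 0 => x
  | i + 1 => Aq *ᵥ (predState Aq Bq h x U i) +
      h • (Bq *ᵥ (if hi : i < N then U ⟨i, hi⟩ else 0))

/-- Reference states: `r_i = (exp (h H))^i r`. -/
noncomputable def refState {n : ℕ} (H : Matrix (Fin n) (Fin n) ℝ) (h : ℝ)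
    (r : Fin n → ℝ) (i : ℕ) : Fin n → ℝ :=
  ((NormedSpace.exp (h • H)) ^ i) *ᵥ r

/-- The MPC cost
`J(x, r, U) = (x_N - r_N)ᵀ P (x_N - r_N) + Σ_{i<N} [(x_i - r_i)ᵀ Q (x_i - r_i) + u_iᵀ R u_i]`. -/
noncomputable def mpcCost {n m N : ℕ} (Aq : Matrix (Fin n) (Fin n) ℝ)
    (Bq : Matrix (Fin n) (Fin m) ℝ) (H : Matrix (Fin n) (Fin n) ℝ) (h : ℝ)
    (P Q : Matrix (Fin n) (Fin n) ℝ) (R : Matrix (Fin m) (Fin m) ℝ)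
    (x r : Fin n → ℝ) (U : Fin N → Fin m → ℝ) : ℝ :=
  (predState Aq Bq h x U N - refState H h r N) ⬝ᵥ
      (P *ᵥ (predState Aq Bq h x U N - refState H h r N)) +
    ∑ i : Fin N,
      ((predState Aq Bq h x U i - refState H h r i) ⬝ᵥ
          (Q *ᵥ (predState Aq Bq h x U i - refState H h r i)) +
        (U i) ⬝ᵥ (R *ᵥ (U i)))

/-- The quantized input set `𝒰^N` with `𝒰 = {-1,0,1}^m`. -/
def quantSet (m N : ℕ) : Set (Fin N → Fin m → ℝ) :=
  {U | ∀ i j, U i j = -1 ∨ U i j = 0 ∨ U i j = 1}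

/-- The value function `V(x,r) = min_{U ∈ 𝒰^N} J(x,r,U)`. -/
noncomputable def valueFn {n m N : ℕ} (Aq : Matrix (Fin n) (Fin n) ℝ)
    (Bq : Matrix (Fin n) (Fin m) ℝ) (H : Matrix (Fin n) (Fin n) ℝ) (h : ℝ)
    (P Q : Matrix (Fin n) (Fin n) ℝ) (R : Matrix (Fin m) (Fin m) ℝ)
    (x r : Fin n → ℝ) : ℝ :=
  sInf ((fun U => mpcCost Aq Bq H h P Q R x r U) '' quantSet m N)

/-- The shifted input sequence: drop `u₀` and append `0`. -/
def shiftSeq {m N : ℕ} (U : Fin N → Fin m → ℝ) : Fin N → Fin m → ℝ :=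
  fun i => if hi : (i : ℕ) + 1 < N then U ⟨(i : ℕ) + 1, hi⟩ else 0

/-!
Along the shifted input sequence the states and references of the new problem are those of the
old one advanced by one step, so the two stage sums telescope: the new cost loses the stage cost
at time `0` and gains, at the end of the horizon, the stage cost `eᵀ Q e` of the terminal error
`e = x_N - r_N` and the replacement of `eᵀ P e` by `(A_q e)ᵀ P (A_q e)` (the last input is `0`
and `A_q = exp(hH)` propagates state and reference alike). The negative definiteness of
`Q - P + A_qᵀ P A_q` makes the total gain nonpositive.
-/

lemma dotProduct_mulVec_mulVec_add_le {ι : Type*} [Fintype ι] {A P Q : Matrix ι ι ℝ}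
    (hneg : (-(Q - P + Aᵀ * P * A)).PosSemidef) (d : ι → ℝ) :
    (A *ᵥ d) ⬝ᵥ (P *ᵥ (A *ᵥ d)) + d ⬝ᵥ (Q *ᵥ d) ≤ d ⬝ᵥ (P *ᵥ d) := by
  have hnonneg : 0 ≤ d ⬝ᵥ ((-(Q - P + Aᵀ * P * A)) *ᵥ d) := by
    simpa using hneg.dotProduct_mulVec_nonneg d
  have hAPA : (A *ᵥ d) ⬝ᵥ (P *ᵥ (A *ᵥ d)) = d ⬝ᵥ ((Aᵀ * P * A) *ᵥ d) := by
    rw [Matrix.mul_assoc, ← mulVec_mulVec, ← mulVec_mulVec, dotProduct_mulVec d Aᵀ,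
      vecMul_transpose]
  rw [neg_mulVec, dotProduct_neg, add_mulVec, sub_mulVec, dotProduct_add,
    dotProduct_sub] at hnonneg
  linarith

section MPC

variable {n m N : ℕ} (Aq H : Matrix (Fin n) (Fin n) ℝ) (Bq : Matrix (Fin n) (Fin m) ℝ) (h : ℝ)
  (P Q : Matrix (Fin n) (Fin n) ℝ) (R : Matrix (Fin m) (Fin m) ℝ)

def padInput (U : Fin N → Fin m → ℝ) (i : ℕ) : Fin m → ℝ :=
  if hi : i < N then U ⟨i, hi⟩ else 0

noncomputable def trackingError (x r : Fin n → ℝ) (U : Fin N → Fin m → ℝ) (i : ℕ) :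
    Fin n → ℝ :=
  predState Aq Bq h x U i - refState H h r i

noncomputable def stageCost (x r : Fin n → ℝ) (U : Fin N → Fin m → ℝ) (i : ℕ) : ℝ :=
  trackingError Aq H Bq h x r U i ⬝ᵥ (Q *ᵥ trackingError Aq H Bq h x r U i) +
    padInput U i ⬝ᵥ (R *ᵥ padInput U i)

lemma padInput_shiftSeq (U : Fin N → Fin m → ℝ) (i : ℕ) :
    padInput (shiftSeq U) i = padInput U (i + 1) := by
  by_cases hi : i + 1 < N
  · simp [padInput, shiftSeq, hi, Nat.lt_of_succ_lt hi]
  · by_cases hi' : i < N <;> simp [padInput, shiftSeq, hi, hi']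

lemma padInput_of_le (U : Fin N → Fin m → ℝ) {i : ℕ} (hi : N ≤ i) : padInput U i = 0 :=
  dif_neg (not_lt.mpr hi)

lemma predState_succ (x : Fin n → ℝ) (U : Fin N → Fin m → ℝ) (i : ℕ) :
    predState Aq Bq h x U (i + 1) = Aq *ᵥ predState Aq Bq h x U i + h • (Bq *ᵥ padInput U i) :=
  rfl

lemma predState_shiftSeq (hN : 0 < N) (x : Fin n → ℝ) (U : Fin N → Fin m → ℝ) (i : ℕ) :
    predState Aq Bq h (Aq *ᵥ x + h • (Bq *ᵥ U ⟨0, hN⟩)) (shiftSeq U) i =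
      predState Aq Bq h x U (i + 1) := by
  induction i with
  | zero => simp [predState, hN]
  | succ i ih => rw [predState_succ, ih, padInput_shiftSeq, ← predState_succ]

lemma refState_succ (r : Fin n → ℝ) (i : ℕ) :
    refState H h r (i + 1) = NormedSpace.exp (h • H) *ᵥ refState H h r i := by
  simp only [refState, mulVec_mulVec, pow_succ']

lemma refState_exp_mulVec (r : Fin n → ℝ) (i : ℕ) :
    refState H h (NormedSpace.exp (h • H) *ᵥ r) i = refState H h r (i + 1) := by
  simp only [refState, mulVec_mulVec, pow_succ]

lemma trackingError_succ_of_le (hA : Aq = NormedSpace.exp (h • H)) (x r : Fin n → ℝ)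
    (U : Fin N → Fin m → ℝ) {i : ℕ} (hi : N ≤ i) :
    trackingError Aq H Bq h x r U (i + 1) = Aq *ᵥ trackingError Aq H Bq h x r U i := by
  rw [trackingError, trackingError, predState_succ, refState_succ, padInput_of_le U hi,
    mulVec_zero, smul_zero, add_zero, mulVec_sub, hA]

lemma mpcCost_eq (x r : Fin n → ℝ) (U : Fin N → Fin m → ℝ) :
    mpcCost Aq Bq H h P Q R x r U =
      trackingError Aq H Bq h x r U N ⬝ᵥ (P *ᵥ trackingError Aq H Bq h x r U N) +
        ∑ i ∈ Finset.range N, stageCost Aq H Bq h Q R x r U i := by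
  rw [mpcCost, ← Fin.sum_univ_eq_sum_range]
  congr 1
  refine Finset.sum_congr rfl fun i _ => ?_
  simp [stageCost, trackingError, padInput]

lemma trackingError_shiftSeq (hN : 0 < N) (x r : Fin n → ℝ) (U : Fin N → Fin m → ℝ) (i : ℕ) :
    trackingError Aq H Bq h (Aq *ᵥ x + h • (Bq *ᵥ U ⟨0, hN⟩)) (NormedSpace.exp (h • H) *ᵥ r)
        (shiftSeq U) i = trackingError Aq H Bq h x r U (i + 1) := by
  rw [trackingError, trackingError, predState_shiftSeq Aq Bq h hN, refState_exp_mulVec]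

lemma stageCost_shiftSeq (hN : 0 < N) (x r : Fin n → ℝ) (U : Fin N → Fin m → ℝ) (i : ℕ) :
    stageCost Aq H Bq h Q R (Aq *ᵥ x + h • (Bq *ᵥ U ⟨0, hN⟩)) (NormedSpace.exp (h • H) *ᵥ r)
        (shiftSeq U) i = stageCost Aq H Bq h Q R x r U (i + 1) := by
  rw [stageCost, stageCost, trackingError_shiftSeq Aq H Bq h hN, padInput_shiftSeq]

end MPC

theorem stmt2_general {n m N : ℕ} (hN : 0 < N) (h : ℝ)
    (Aq H : Matrix (Fin n) (Fin n) ℝ) (Bq : Matrix (Fin n) (Fin m) ℝ)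
    (P Q : Matrix (Fin n) (Fin n) ℝ) (R : Matrix (Fin m) (Fin m) ℝ)
    (hA : Aq = NormedSpace.exp (h • H))
    (hneg : (-(Q - P + Aqᵀ * P * Aq)).PosDef)
    (x r : Fin n → ℝ) (U : Fin N → Fin m → ℝ) :
    mpcCost Aq Bq H h P Q R
        (Aq *ᵥ x + h • (Bq *ᵥ U ⟨0, hN⟩))
        (NormedSpace.exp (h • H) *ᵥ r)
        (shiftSeq U) ≤
      mpcCost Aq Bq H h P Q R x r U -
        (U ⟨0, hN⟩) ⬝ᵥ (R *ᵥ (U ⟨0, hN⟩)) -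
        (x - r) ⬝ᵥ (Q *ᵥ (x - r)) := by
  set e := trackingError Aq H Bq h x r U
  have hterminal : trackingError Aq H Bq h (Aq *ᵥ x + h • (Bq *ᵥ U ⟨0, hN⟩))
      (NormedSpace.exp (h • H) *ᵥ r) (shiftSeq U) N = Aq *ᵥ e N := by
    rw [trackingError_shiftSeq Aq H Bq h hN, trackingError_succ_of_le Aq H Bq h hA x r U le_rfl]
  have hstage0 : stageCost Aq H Bq h Q R x r U 0 =
      (x - r) ⬝ᵥ (Q *ᵥ (x - r)) + U ⟨0, hN⟩ ⬝ᵥ (R *ᵥ U ⟨0, hN⟩) := by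
    simp [stageCost, trackingError, padInput, hN, predState, refState]
  have hstageN : stageCost Aq H Bq h Q R x r U N = e N ⬝ᵥ (Q *ᵥ e N) := by
    simp [stageCost, padInput_of_le U le_rfl, e]
  have htelescope := Finset.sum_range_succ' (stageCost Aq H Bq h Q R x r U) N
  rw [Finset.sum_range_succ] at htelescope
  rw [mpcCost_eq, mpcCost_eq, hterminal, Finset.sum_congr rfl fun i _ =>
    stageCost_shiftSeq Aq H Bq h Q R hN x r U i]
  linarith [dotProduct_mulVec_mulVec_add_le hneg.posSemidef (e N)]

/-- shifted-sequence cost inequality. -/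
theorem stmt2 {n m N : ℕ} (hN : 0 < N) (h : ℝ) (hh : 0 < h)
    (Aq H : Matrix (Fin n) (Fin n) ℝ) (Bq : Matrix (Fin n) (Fin m) ℝ)
    (P Q : Matrix (Fin n) (Fin n) ℝ) (R : Matrix (Fin m) (Fin m) ℝ)
    (hP : P.PosDef) (hQ : Q.PosDef) (hR : R.PosDef)
    (hA : Aq = NormedSpace.exp (h • H))
    (hneg : (-(Q - P + Aqᵀ * P * Aq)).PosDef)
    (x r : Fin n → ℝ) (U : Fin N → Fin m → ℝ) :
    mpcCost Aq Bq H h P Q R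
        (Aq *ᵥ x + h • (Bq *ᵥ U ⟨0, hN⟩))
        (NormedSpace.exp (h • H) *ᵥ r)
        (shiftSeq U) ≤
      mpcCost Aq Bq H h P Q R x r U -
        (U ⟨0, hN⟩) ⬝ᵥ (R *ᵥ (U ⟨0, hN⟩)) -
        (x - r) ⬝ᵥ (Q *ᵥ (x - r)) :=
  stmt2_general hN h Aq H Bq P Q R hA hneg x r U
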